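/- If [x,y] is a MUPS of S with y ≤ t and x > s (where s ≤ t), and S[i..j] is a SUPS for [s,t] whose unique MUPS is [x,y], then [x,y] must be the rightmost MUPS ending at or before t (i.e., there is no MUPS [x',y'] with y < y' ≤ t) — equivalently, any SUPS for [s,t] contains only a MUPS that either contains [s,t], is the rightmost MUPS ending at or before t, or is the leftmost MUPS beginning at or after s. -/

import Mathlib

/-- `sub S i j` is the substring `S[i..j]`, 1-indexed and inclusive. -/
def sub (S : List Char) (i j : ℕ) : List Char := (S.drop (i-1)).take (j+1-i)

/-- A string is a palindrome if it equals its reversal. -/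
def isPal (w : List Char) : Prop := w.reverse = w

/-- The set of (1-indexed) occurrence positions of `w` in `S`. -/
def occs (S w : List Char) : Finset ℕ :=
  (Finset.Icc 1 S.length).filter (fun p => sub S p (p + w.length - 1) = w)

/-- `w` occurs exactly once in `S`. -/
def uniqueIn (S w : List Char) : Prop := (occs S w).card = 1

/-- `[i,j]` is (the interval of) a unique palindromic substring of `S`. -/
def UPS (S : List Char) (i j : ℕ) : Prop :=
  1 ≤ i ∧ i ≤ j ∧ j ≤ S.length ∧ isPal (sub S i j) ∧ uniqueIn S (sub S i j)

/-- `[i,j]` is a minimal unique palindromic substring of `S`. -/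
def MUPS (S : List Char) (i j : ℕ) : Prop :=
  UPS S i j ∧ (j + 1 - i ≤ 2 ∨ 2 ≤ (occs S (sub S (i+1) (j-1))).card)

/-- `[i,j]` is a shortest unique palindromic substring of `S` for the query `[s,t]`. -/
def SUPS (S : List Char) (s t i j : ℕ) : Prop :=
  UPS S i j ∧ i ≤ s ∧ s ≤ t ∧ t ≤ j ∧
    ∀ i' j', UPS S i' j' → i' ≤ s → t ≤ j' → j - i ≤ j' - i'

/-! Reflecting a unique palindrome S[x..y] inside a palindrome S[i..j] gives another occurrence
unless the two share their center, so every UPS nested in S[i..j] is centered at (i + j) / 2.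
On the other hand a MUPS cannot strictly contain a unique substring, since its inner part occurs
twice. Hence a MUPS ending in (y, t] (resp. starting in [s, x)) would, whether it lies in [i, j]
(same center) or sticks out of it, strictly contain [x, y]. -/

lemma length_sub (S : List Char) {i j : ℕ} (hi : 1 ≤ i) (hij : i ≤ j + 1) (hj : j ≤ S.length) :
    (sub S i j).length = j + 1 - i := by
  simp only [sub, List.length_take, List.length_drop]; omega

lemma sub_sub_eq (S : List Char) {a b u v : ℕ} (ha : 1 ≤ a) (hu : 1 ≤ u) (hv : v ≤ b + 1 - a) :
    sub (sub S a b) u v = sub S (a - 1 + u) (a - 1 + v) := by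
  simp only [sub, List.drop_take, List.take_take, List.drop_drop]
  congr 1
  · omega
  · congr 1; omega

lemma reverse_sub (w : List Char) {u v : ℕ} (hu : 1 ≤ u) (huv : u ≤ v + 1) (hv : v ≤ w.length) :
    (sub w u v).reverse = sub w.reverse (w.length + 1 - v) (w.length + 1 - u) := by
  apply List.ext_getElem
  · simp only [sub, List.length_reverse, List.length_take, List.length_drop]; omega
  · intro k h1 h2
    simp only [sub, List.length_reverse, List.length_take, List.length_drop] at h1 h2
    simp only [sub, List.getElem_reverse, List.getElem_take, List.getElem_drop, List.length_take,
      List.length_drop]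
    congr 1
    omega

lemma isPal.sub_reflect {S : List Char} {i j x y : ℕ} (hp : isPal (sub S i j)) (hi : 1 ≤ i)
    (hix : i ≤ x) (hxy : x ≤ y) (hyj : y ≤ j) (hj : j ≤ S.length) :
    sub S (i + j - y) (i + j - x) = (sub S x y).reverse := by
  have hw : (sub S i j).length = j + 1 - i := length_sub S hi (by omega) hj
  have hxy' : sub S x y = sub (sub S i j) (x - i + 1) (y - i + 1) := by
    rw [sub_sub_eq S hi (by omega) (by omega)]; congr 1 <;> omega
  rw [hxy', reverse_sub _ (by omega) (by omega) (by omega), hp, hw,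
    sub_sub_eq S hi (by omega) (by omega)]
  congr 1 <;> omega

lemma mem_occs {S w : List Char} {p : ℕ} :
    p ∈ occs S w ↔ 1 ≤ p ∧ p ≤ S.length ∧ sub S p (p + w.length - 1) = w := by
  simp only [occs, Finset.mem_filter, Finset.mem_Icc, and_assoc]

lemma self_mem_occs_sub (S : List Char) {x y : ℕ} (hx : 1 ≤ x) (hxy : x ≤ y)
    (hy : y ≤ S.length) : x ∈ occs S (sub S x y) := by
  rw [mem_occs, length_sub S hx (by omega) hy]
  exact ⟨hx, by omega, by congr 1; omega⟩

lemma uniqueIn.eq_of_mem_occs_sub {S : List Char} {x y p : ℕ} (hu : uniqueIn S (sub S x y))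
    (hx : 1 ≤ x) (hxy : x ≤ y) (hy : y ≤ S.length) (hp : p ∈ occs S (sub S x y)) : p = x := by
  obtain ⟨a, ha⟩ := Finset.card_eq_one.mp hu
  have hx' := self_mem_occs_sub S hx hxy hy
  rw [ha, Finset.mem_singleton] at hp hx'
  rw [hp, hx']

lemma add_mem_occs_sub {S : List Char} {a b x y p : ℕ} (ha : 1 ≤ a) (hax : a ≤ x)
    (hxy : x ≤ y) (hyb : y ≤ b) (hb : b ≤ S.length) (hp : p ∈ occs S (sub S a b)) :
    p + (x - a) ∈ occs S (sub S x y) := by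
  rw [mem_occs, length_sub S ha (by omega) hb] at hp
  obtain ⟨hp1, -, hpab⟩ := hp
  have hfit : p + (b + 1 - a) - 1 ≤ S.length := by
    have := congrArg List.length hpab
    rw [length_sub S ha (by omega) hb] at this
    simp only [sub, List.length_take, List.length_drop] at this
    omega
  rw [mem_occs, length_sub S (by omega) (by omega) (by omega)]
  refine ⟨by omega, by omega, ?_⟩
  have key := congrArg (fun w => sub w (x - a + 1) (y - a + 1)) hpab
  rw [sub_sub_eq S hp1 (by omega) (by omega), sub_sub_eq S ha (by omega) (by omega)] at key
  convert key using 2 <;> omega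

lemma card_occs_sub_le {S : List Char} {a b x y : ℕ} (ha : 1 ≤ a) (hax : a ≤ x)
    (hxy : x ≤ y) (hyb : y ≤ b) (hb : b ≤ S.length) :
    (occs S (sub S a b)).card ≤ (occs S (sub S x y)).card :=
  Finset.card_le_card_of_injOn (· + (x - a))
    (fun _ hp => add_mem_occs_sub ha hax hxy hyb hb hp)
    (fun _ _ _ _ h => by simpa using h)

lemma UPS.add_eq_add_of_le {S : List Char} {i j x y : ℕ} (hij : UPS S i j) (hxy : UPS S x y)
    (hix : i ≤ x) (hyj : y ≤ j) : x + y = i + j := by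
  obtain ⟨hi, -, hj, hpij, -⟩ := hij
  obtain ⟨hx, hxy, hy, hpxy, huxy⟩ := hxy
  have hmem : i + j - y ∈ occs S (sub S x y) := by
    rw [mem_occs, length_sub S hx (by omega) hy]
    refine ⟨by omega, by omega, ?_⟩
    rw [show i + j - y + (y + 1 - x) - 1 = i + j - x by omega,
      hpij.sub_reflect hi hix hxy hyj hj, hpxy]
  have := huxy.eq_of_mem_occs_sub hx hxy hy hmem
  omega

lemma MUPS.not_uniqueIn_sub_of_lt_of_lt {S : List Char} {a b x y : ℕ} (hab : MUPS S a b)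
    (hax : a < x) (hxy : x ≤ y) (hyb : y < b) : ¬ uniqueIn S (sub S x y) := by
  obtain ⟨⟨ha, -, hb, -, -⟩, hshort | hrepeat⟩ := hab
  · omega
  · have := hrepeat.trans (card_occs_sub_le (by omega) (by omega) hxy (by omega) (by omega))
    rw [uniqueIn]
    omega

lemma MUPS.right_le_of_le {S : List Char} {i j x y x' y' : ℕ} (h' : MUPS S x' y')
    (hij : UPS S i j) (hxy : UPS S x y) (hix : i ≤ x) (hyj : y ≤ j) (hy' : y' ≤ j) : y' ≤ y := by
  by_contra! hyy'
  have hx'x : x' < x := by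
    rcases le_or_gt i x' with hix' | hx'i
    · have := hij.add_eq_add_of_le h'.1 hix' hy'
      have := hij.add_eq_add_of_le hxy hix hyj
      omega
    · omega
  exact h'.not_uniqueIn_sub_of_lt_of_lt hx'x hxy.2.1 hyy' hxy.2.2.2.2

lemma MUPS.le_left_of_le {S : List Char} {i j x y x' y' : ℕ} (h' : MUPS S x' y')
    (hij : UPS S i j) (hxy : UPS S x y) (hix : i ≤ x) (hyj : y ≤ j) (hx' : i ≤ x') : x ≤ x' := by
  by_contra! hx'x
  have hyy' : y < y' := by
    rcases le_or_gt y' j with hy'j | hjy'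
    · have := hij.add_eq_add_of_le h'.1 hx' hy'j
      have := hij.add_eq_add_of_le hxy hix hyj
      omega
    · omega
  exact h'.not_uniqueIn_sub_of_lt_of_lt hx'x hxy.2.1 hyy' hxy.2.2.2.2

theorem stmt15 (S : List Char) (s t i j x y : ℕ)
    (hs : SUPS S s t i j) (hm : MUPS S x y) (hxi : i ≤ x) (hyj : y ≤ j) :
    (x ≤ s ∧ t ≤ y) ∨
    (y ≤ t ∧ ∀ x' y', MUPS S x' y' → y' ≤ t → y' ≤ y) ∨
    (s ≤ x ∧ ∀ x' y', MUPS S x' y' → s ≤ x' → x ≤ x') := by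
  obtain ⟨hij, his, -, htj, -⟩ := hs
  by_cases hyt : y ≤ t
  · exact Or.inr <| Or.inl ⟨hyt, fun x' y' h' hy' =>
      h'.right_le_of_le hij hm.1 hxi hyj (hy'.trans htj)⟩
  by_cases hxs : x ≤ s
  · exact Or.inl ⟨hxs, by omega⟩
  · exact Or.inr <| Or.inr ⟨by omega, fun x' y' h' hx' =>
      h'.le_left_of_le hij hm.1 hxi hyj (his.trans hx')⟩
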